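/- arXiv:1212.3389 — 3 statements merged into one kernel-verified Lean document; each statement's English description precedes it below -/
import Mathlib

section
/- For any two points w, z in the upper half plane and any Borel set S ⊆ ℝ, the difference of harmonic measures satisfies |ω_w(S) − ω_z(S)| ≤ γ(w,z), where ω_z(S) = (1/π)∫_S Im z / ((t − Re z)² + (Im z)²) dt and γ(w,z) = |w−z|/(√(Im w)·√(Im z)). -/
/-!
For real `t`, the Poisson kernel of the upper half plane is `P z t = Im z / ‖t - z‖² = Im (t - z)⁻¹`.
Hence `P w t - P z t = Im ((w - z) / ((t - w) (t - z)))`, whose absolute value is at most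
`‖w - z‖ / (‖t - w‖ ‖t - z‖) = γ(w, z) √(P w t P z t) ≤ γ(w, z) (P w t + P z t) / 2`.
Integrating over `S` and bounding by the integrals over `ℝ`, which both equal `π`,
gives `π |ω_w(S) - ω_z(S)| ≤ π γ(w, z)`.
-/

open MeasureTheory

/-- Harmonic measure of a Borel set `S ⊆ ℝ` seen from `z` in the upper half plane. -/
noncomputable def harmonicMeasure (z : ℂ) (S : Set ℝ) : ℝ :=
  (1 / Real.pi) * ∫ t in S, z.im / ((t - z.re) ^ 2 + z.im ^ 2)

/-- Hyperbolic (pseudo-)distance on the upper half plane. -/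
noncomputable def hypDist (w z : ℂ) : ℝ :=
  ‖w - z‖ / (Real.sqrt w.im * Real.sqrt z.im)

open Real ProbabilityTheory

theorem abs_setIntegral_sub_le_of_abs_sub_le {α : Type*} [MeasurableSpace α] {μ : Measure α}
    {f g : α → ℝ} {c : ℝ} (hf : Integrable f μ) (hg : Integrable g μ)
    (hfg : ∀ x, |f x - g x| ≤ c * (f x + g x)) (s : Set α) :
    |∫ x in s, f x ∂μ - ∫ x in s, g x ∂μ| ≤ c * (∫ x, f x ∂μ + ∫ x, g x ∂μ) := by
  have hbound : Integrable (fun x => c * (f x + g x)) μ := (hf.add hg).const_mul c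
  calc |∫ x in s, f x ∂μ - ∫ x in s, g x ∂μ| = |∫ x in s, (f x - g x) ∂μ| := by
        rw [integral_sub hf.integrableOn hg.integrableOn]
    _ ≤ ∫ x in s, |f x - g x| ∂μ := abs_integral_le_integral_abs
    _ ≤ ∫ x in s, c * (f x + g x) ∂μ :=
        setIntegral_mono (hf.sub hg).abs.integrableOn hbound.integrableOn hfg
    _ ≤ ∫ x, c * (f x + g x) ∂μ :=
        setIntegral_le_integral hbound (ae_of_all _ fun x => (abs_nonneg _).trans (hfg x))
    _ = c * (∫ x, f x ∂μ + ∫ x, g x ∂μ) := by rw [integral_const_mul, integral_add hf hg]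

namespace Complex

theorem normSq_ofReal_sub (t : ℝ) (z : ℂ) : normSq (t - z) = (t - z.re) ^ 2 + z.im ^ 2 := by
  simp only [normSq_apply, sub_re, sub_im, ofReal_re, ofReal_im]
  ring

theorem ofReal_ne_of_im_pos {z : ℂ} (hz : 0 < z.im) (t : ℝ) : (t : ℂ) ≠ z := by
  rintro rfl
  simp at hz

end Complex

noncomputable def halfPlanePoissonKernel (z : ℂ) (t : ℝ) : ℝ :=
  z.im / ((t - z.re) ^ 2 + z.im ^ 2)

local notation "P" => halfPlanePoissonKernel

theorem harmonicMeasure_eq (z : ℂ) (S : Set ℝ) :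
    harmonicMeasure z S = (1 / π) * ∫ t in S, P z t :=
  rfl

section

variable {w z : ℂ}

theorem halfPlanePoissonKernel_eq_im_inv (z : ℂ) (t : ℝ) : P z t = ((t - z : ℂ)⁻¹).im := by
  simp [halfPlanePoissonKernel, Complex.inv_im, Complex.normSq_ofReal_sub]

theorem halfPlanePoissonKernel_eq_div_norm_sq (z : ℂ) (t : ℝ) :
    P z t = z.im / ‖(t - z : ℂ)‖ ^ 2 := by
  rw [halfPlanePoissonKernel, Complex.sq_norm, Complex.normSq_ofReal_sub]

theorem halfPlanePoissonKernel_eq_pi_mul_cauchyPDFReal (hz : 0 ≤ z.im) (t : ℝ) :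
    P z t = π * cauchyPDFReal z.re z.im.toNNReal t := by
  rw [cauchyPDFReal_def, Real.coe_toNNReal _ hz, halfPlanePoissonKernel]
  field_simp

theorem integrable_halfPlanePoissonKernel (hz : 0 ≤ z.im) : Integrable (P z) := by
  simpa only [funext (halfPlanePoissonKernel_eq_pi_mul_cauchyPDFReal hz)] using
    (integrable_cauchyPDFReal _).const_mul π

theorem integral_halfPlanePoissonKernel (hz : 0 < z.im) : ∫ t, P z t = π := by
  simp only [halfPlanePoissonKernel_eq_pi_mul_cauchyPDFReal hz.le, integral_const_mul,
    integral_cauchyPDFReal_eq_one _ (Real.toNNReal_pos.mpr hz).ne', mul_one]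

theorem abs_halfPlanePoissonKernel_sub_le {t : ℝ} (htw : (t : ℂ) ≠ w) (htz : (t : ℂ) ≠ z) :
    |P w t - P z t| ≤ ‖w - z‖ / (‖(t - w : ℂ)‖ * ‖(t - z : ℂ)‖) := by
  have hdiff : (t - w : ℂ)⁻¹ - (t - z)⁻¹ = (w - z) / ((t - w) * (t - z)) := by
    rw [inv_sub_inv (sub_ne_zero.mpr htw) (sub_ne_zero.mpr htz)]
    ring
  rw [halfPlanePoissonKernel_eq_im_inv, halfPlanePoissonKernel_eq_im_inv, ← Complex.sub_im,
    hdiff, ← norm_mul, ← norm_div]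
  exact Complex.abs_im_le_norm _

theorem hypDist_mul_sqrt_halfPlanePoissonKernel (hw : 0 < w.im) (hz : 0 < z.im) (t : ℝ) :
    hypDist w z * √(P w t * P z t) = ‖w - z‖ / (‖(t - w : ℂ)‖ * ‖(t - z : ℂ)‖) := by
  have htw : 0 < ‖(t - w : ℂ)‖ :=
    norm_pos_iff.mpr (sub_ne_zero.mpr (Complex.ofReal_ne_of_im_pos hw t))
  have htz : 0 < ‖(t - z : ℂ)‖ :=
    norm_pos_iff.mpr (sub_ne_zero.mpr (Complex.ofReal_ne_of_im_pos hz t))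
  have hsq : P w t * P z t = (√w.im * √z.im / (‖(t - w : ℂ)‖ * ‖(t - z : ℂ)‖)) ^ 2 := by
    rw [halfPlanePoissonKernel_eq_div_norm_sq, halfPlanePoissonKernel_eq_div_norm_sq, div_pow,
      mul_pow, mul_pow, sq_sqrt hw.le, sq_sqrt hz.le]
    ring
  have := Real.sqrt_pos.mpr hw
  have := Real.sqrt_pos.mpr hz
  rw [hsq, Real.sqrt_sq (by positivity), hypDist]
  field_simp

theorem abs_halfPlanePoissonKernel_sub_le_hypDist (hw : 0 < w.im) (hz : 0 < z.im) (t : ℝ) :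
    |P w t - P z t| ≤ hypDist w z / 2 * (P w t + P z t) := by
  have hPw : 0 ≤ P w t := by rw [halfPlanePoissonKernel]; positivity
  have hPz : 0 ≤ P z t := by rw [halfPlanePoissonKernel]; positivity
  have amgm : √(P w t * P z t) ≤ (P w t + P z t) / 2 :=
    Real.sqrt_le_iff.mpr ⟨by positivity, by nlinarith [sq_nonneg (P w t - P z t)]⟩
  have hγ : 0 ≤ hypDist w z := by unfold hypDist; positivity
  calc |P w t - P z t| ≤ hypDist w z * √(P w t * P z t) := by
        rw [hypDist_mul_sqrt_halfPlanePoissonKernel hw hz]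
        exact abs_halfPlanePoissonKernel_sub_le (Complex.ofReal_ne_of_im_pos hw t)
          (Complex.ofReal_ne_of_im_pos hz t)
    _ ≤ hypDist w z * ((P w t + P z t) / 2) := mul_le_mul_of_nonneg_left amgm hγ
    _ = hypDist w z / 2 * (P w t + P z t) := by ring

end

theorem harmonicMeasure_diff_le_hypDist_general (w z : ℂ) (hw : 0 < w.im) (hz : 0 < z.im)
    (S : Set ℝ) :
    |harmonicMeasure w S - harmonicMeasure z S| ≤ hypDist w z := by
  have h := abs_setIntegral_sub_le_of_abs_sub_le (integrable_halfPlanePoissonKernel hw.le)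
    (integrable_halfPlanePoissonKernel hz.le) (abs_halfPlanePoissonKernel_sub_le_hypDist hw hz) S
  rw [integral_halfPlanePoissonKernel hw, integral_halfPlanePoissonKernel hz] at h
  rw [harmonicMeasure_eq, harmonicMeasure_eq, ← mul_sub, abs_mul, abs_of_pos (by positivity)]
  calc 1 / π * |(∫ t in S, P w t) - ∫ t in S, P z t| ≤ 1 / π * (hypDist w z / 2 * (π + π)) := by
        gcongr
    _ = hypDist w z := by field_simp; ring

theorem harmonicMeasure_diff_le_hypDist (w z : ℂ) (hw : 0 < w.im) (hz : 0 < z.im)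
    (S : Set ℝ) (hS : MeasurableSet S) :
    |harmonicMeasure w S - harmonicMeasure z S| ≤ hypDist w z :=
  harmonicMeasure_diff_le_hypDist_general w z hw hz S
end

section
/- If f = u + m v solves the canonical system J f' = z H f on [0,N] with Im z > 0, where u, v are solutions with u(0) = (1,0)ᵀ, v(0) = (0,1)ᵀ, then W_N(f̄, f) = 2i Im m − 2i (Im z) ∫₀ᴺ f(x)* H(x) f(x) dx. -/
open MeasureTheory Matrix
open scoped ComplexOrder

/-- The standard symplectic matrix `J = [[0,-1],[1,0]]`. -/
noncomputable def Jmat : Matrix (Fin 2) (Fin 2) ℂ := !![0, -1; 1, 0]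

/-- Wronskian `W_x(f,g) = f₁(x)g₂(x) − f₂(x)g₁(x)`. -/
noncomputable def Wron (f g : ℝ → Fin 2 → ℂ) (x : ℝ) : ℂ :=
  f x 0 * g x 1 - f x 1 * g x 0

/-!
Since `W_x(f̄, f) = -f(x)* J f(x)` and `J* = -J`, the equation `J f' = z H f` with `H` Hermitian
gives `(f* J f)' = (z - z̄) f* H f`. Integrating over `[0, N]` and using `f(0) = (1, m)`,
where `f(0)* J f(0) = m̄ - m`, yields the identity.
-/

section Deriv

variable {𝕜 𝔸 ι κ : Type*} [NontriviallyNormedField 𝕜] [NormedRing 𝔸] [NormedAlgebra 𝕜 𝔸]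
  [Fintype κ] {x : 𝕜}

theorem HasDerivAt.dotProduct {f g : 𝕜 → κ → 𝔸} {f' g' : κ → 𝔸}
    (hf : HasDerivAt f f' x) (hg : HasDerivAt g g' x) :
    HasDerivAt (fun x => f x ⬝ᵥ g x) (f' ⬝ᵥ g x + f x ⬝ᵥ g') x := by
  rw [hasDerivAt_pi] at hf hg
  have h := HasDerivAt.fun_sum (u := Finset.univ) fun i _ => (hf i).fun_mul (hg i)
  rwa [Finset.sum_add_distrib] at h

theorem HasDerivAt.mulVec (A : Matrix ι κ 𝔸) {f : 𝕜 → κ → 𝔸} {f' : κ → 𝔸}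
    (hf : HasDerivAt f f' x) : HasDerivAt (fun x => A *ᵥ f x) (A *ᵥ f') x := by
  rw [hasDerivAt_pi] at hf ⊢
  intro i
  exact HasDerivAt.fun_sum (u := Finset.univ) fun j _ => (hf j).const_mul (A i j)

end Deriv

theorem Jmat_conjTranspose : Jmatᴴ = -Jmat := by
  ext i j; fin_cases i <;> fin_cases j <;> simp [Jmat]

theorem Wron_star_eq_neg_dotProduct (f : ℝ → Fin 2 → ℂ) (x : ℝ) :
    Wron (fun x => star (f x)) f x = -(star (f x) ⬝ᵥ Jmat *ᵥ f x) := by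
  simp [Wron, Jmat, dotProduct, mulVec, Fin.sum_univ_two]
  ring

theorem mulVec_add_smul_of_mulVec_eq {n : Type*} [Fintype n] {A H : Matrix n n ℂ} {z m : ℂ}
    {a a' b b' : n → ℂ} (ha : A *ᵥ a' = z • H *ᵥ a) (hb : A *ᵥ b' = z • H *ᵥ b) :
    A *ᵥ (a' + m • b') = z • H *ᵥ (a + m • b) := by
  rw [mulVec_add, mulVec_smul, ha, hb, mulVec_add, mulVec_smul, smul_add, smul_comm]

theorem star_dotProduct_mulVec_add_of_conjTranspose_eq_neg {n : Type*} [Fintype n]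
    {A H : Matrix n n ℂ} (hA : Aᴴ = -A) (hH : H.IsHermitian) {z : ℂ} {w w' : n → ℂ}
    (hw : A *ᵥ w' = z • H *ᵥ w) :
    star w' ⬝ᵥ A *ᵥ w + star w ⬝ᵥ A *ᵥ w' = (z - star z) * (star w ⬝ᵥ H *ᵥ w) := by
  have hleft : star w' ⬝ᵥ A *ᵥ w = -(star z * (star w ⬝ᵥ H *ᵥ w)) := by
    rw [dotProduct_mulVec, ← neg_neg A, ← hA, vecMul_neg, ← star_mulVec, hw, star_smul,
      star_mulVec, hH.eq, neg_dotProduct, smul_dotProduct, ← dotProduct_mulVec, smul_eq_mul]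
  rw [hleft, hw, dotProduct_smul, smul_eq_mul]
  ring

theorem HasDerivAt.star_dotProduct_mulVec {n : Type*} [Fintype n] {A H : Matrix n n ℂ}
    (hA : Aᴴ = -A) (hH : H.IsHermitian) {z : ℂ} {f : ℝ → n → ℂ} {f' : n → ℂ} {x : ℝ}
    (hf : HasDerivAt f f' x) (hsys : A *ᵥ f' = z • H *ᵥ f x) :
    HasDerivAt (fun x => star (f x) ⬝ᵥ A *ᵥ f x)
      ((z - star z) * (star (f x) ⬝ᵥ H *ᵥ f x)) x := by
  rw [← star_dotProduct_mulVec_add_of_conjTranspose_eq_neg hA hH hsys]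
  exact hf.star.dotProduct (hf.mulVec A)

theorem wronskian_of_weyl_solution_general (N : ℝ) (hN : 0 < N) (z : ℂ)
    (H : ℝ → Matrix (Fin 2) (Fin 2) ℂ) (hH : ∀ x, (H x).PosSemidef)
    (u v u' v' : ℝ → Fin 2 → ℂ)
    (hu0 : u 0 = ![1, 0]) (hv0 : v 0 = ![0, 1])
    (hu : ∀ x ∈ Set.Icc (0:ℝ) N, HasDerivAt u (u' x) x)
    (hv : ∀ x ∈ Set.Icc (0:ℝ) N, HasDerivAt v (v' x) x)
    (hue : ∀ x ∈ Set.Icc (0:ℝ) N, Jmat *ᵥ u' x = z • ((H x) *ᵥ u x))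
    (hve : ∀ x ∈ Set.Icc (0:ℝ) N, Jmat *ᵥ v' x = z • ((H x) *ᵥ v x))
    (m : ℂ) (f : ℝ → Fin 2 → ℂ) (hf : f = fun x => u x + m • v x)
    (hint : IntervalIntegrable (fun x => star (f x) ⬝ᵥ ((H x) *ᵥ f x)) volume 0 N) :
    Wron (fun x => star (f x)) f N
      = 2 * Complex.I * (m.im : ℂ)
        - 2 * Complex.I * (z.im : ℂ) * ∫ x in (0:ℝ)..N, star (f x) ⬝ᵥ ((H x) *ᵥ f x) := by
  set Q := fun x => star (f x) ⬝ᵥ H x *ᵥ f x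
  have hderiv : ∀ x ∈ Set.uIcc 0 N,
      HasDerivAt (fun x => star (f x) ⬝ᵥ Jmat *ᵥ f x) ((z - star z) * Q x) x := by
    intro x hx
    rw [Set.uIcc_of_le hN.le] at hx
    have hfx : HasDerivAt f (u' x + m • v' x) x := hf ▸ (hu x hx).add ((hv x hx).const_smul m)
    have hsys : Jmat *ᵥ (u' x + m • v' x) = z • H x *ᵥ f x :=
      hf ▸ mulVec_add_smul_of_mulVec_eq (hue x hx) (hve x hx)
    exact hfx.star_dotProduct_mulVec Jmat_conjTranspose (hH x).isHermitian hsys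
  have hFTC := intervalIntegral.integral_eq_sub_of_hasDerivAt hderiv (hint.const_mul _)
  have hstart : star (f 0) ⬝ᵥ Jmat *ᵥ f 0 = star m - m := by
    simp [hf, hu0, hv0, Jmat, dotProduct, mulVec, Fin.sum_univ_two, neg_add_eq_sub]
  rw [intervalIntegral.integral_const_mul, hstart] at hFTC
  rw [Wron_star_eq_neg_dotProduct]
  have hz := Complex.sub_conj z
  have hm := Complex.sub_conj m
  rw [← Complex.star_def] at hz hm
  push_cast at hz hm
  linear_combination hm - (∫ x in (0:ℝ)..N, Q x) * hz + hFTC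

theorem wronskian_of_weyl_solution (N : ℝ) (hN : 0 < N) (z : ℂ) (hz : 0 < z.im)
    (H : ℝ → Matrix (Fin 2) (Fin 2) ℂ) (hH : ∀ x, (H x).PosSemidef)
    (u v u' v' : ℝ → Fin 2 → ℂ)
    (hu0 : u 0 = ![1, 0]) (hv0 : v 0 = ![0, 1])
    (hu : ∀ x ∈ Set.Icc (0:ℝ) N, HasDerivAt u (u' x) x)
    (hv : ∀ x ∈ Set.Icc (0:ℝ) N, HasDerivAt v (v' x) x)
    (hue : ∀ x ∈ Set.Icc (0:ℝ) N, Jmat *ᵥ u' x = z • ((H x) *ᵥ u x))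
    (hve : ∀ x ∈ Set.Icc (0:ℝ) N, Jmat *ᵥ v' x = z • ((H x) *ᵥ v x))
    (m : ℂ) (f : ℝ → Fin 2 → ℂ) (hf : f = fun x => u x + m • v x)
    (hint : IntervalIntegrable (fun x => star (f x) ⬝ᵥ ((H x) *ᵥ f x)) volume 0 N) :
    Wron (fun x => star (f x)) f N
      = 2 * Complex.I * (m.im : ℂ)
        - 2 * Complex.I * (z.im : ℂ) * ∫ x in (0:ℝ)..N, star (f x) ⬝ᵥ ((H x) *ᵥ f x) :=
  wronskian_of_weyl_solution_general N hN z H hH u v u' v' hu0 hv0 hu hv hue hve m f hf hint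
end

section
/- For solutions u, v of the canonical system Ju' = zHu on [0,N] with Im z > 0 and real initial data u(0)=(1,0)ᵀ, v(0)=(0,1)ᵀ, the Wronskian identity |W_N(u, v̄)|² = 1 − W_N(u, ū) W_N(v, v̄) holds. -/
/-!
A real Hermitian `H` is symmetric, so for solutions of `J y' = z H y` the derivative of
`W(u, v)` is `z (⟨H u, v⟩ - ⟨u, H v⟩) = 0`, and `W_N(u, v) = W_0(u, v) = 1`. The identity is then
the Plücker relation `W(u,v) W(ū,v̄) - W(u,ū) W(v,v̄) + W(u,v̄) W(v,ū) = 0` together with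
`W(v, ū) = -conj W(u, v̄)` and `W(ū, v̄) = conj W(u, v)`.
-/

open MeasureTheory Matrix
open scoped ComplexOrder

theorem Matrix.IsHermitian.transpose_eq_self_of_im_eq_zero {n : Type*} {A : Matrix n n ℂ}
    (hA : A.IsHermitian) (hre : ∀ i j, (A i j).im = 0) : Aᵀ = A := by
  ext i j
  rw [transpose_apply, ← hA.apply i j]
  exact (Complex.conj_eq_iff_im.mpr (hre j i)).symm

theorem Jmat_mulVec (a : Fin 2 → ℂ) : Jmat *ᵥ a = ![-a 1, a 0] := by
  ext i; fin_cases i <;> simp [Jmat, mulVec, dotProduct, Fin.sum_univ_two]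

theorem hasDerivAt_wron {u v u' v' : ℝ → Fin 2 → ℂ} {x : ℝ}
    (hu : HasDerivAt u (u' x) x) (hv : HasDerivAt v (v' x) x) :
    HasDerivAt (Wron u v) (Wron u' v x + Wron u v' x) x := by
  have h : ∀ {w w' : ℝ → Fin 2 → ℂ}, HasDerivAt w (w' x) x → ∀ i,
      HasDerivAt (fun t => w t i) (w' x i) x := fun hw i => hasDerivAt_pi.mp hw i
  exact (((h hu 0).mul (h hv 1)).sub ((h hu 1).mul (h hv 0))).congr_deriv
    (by simp only [Wron]; ring)

theorem wron_deriv_eq_zero {S : Matrix (Fin 2) (Fin 2) ℂ} (hS : Sᵀ = S) {z : ℂ}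
    {u v u' v' : ℝ → Fin 2 → ℂ} {x : ℝ}
    (hu : Jmat *ᵥ u' x = z • S *ᵥ u x) (hv : Jmat *ᵥ v' x = z • S *ᵥ v x) :
    Wron u' v x + Wron u v' x = 0 := by
  have h01 : S 0 1 = S 1 0 := by simpa using congrFun (congrFun hS 1) 0
  rw [Jmat_mulVec] at hu hv
  have hu0 := congrFun hu 0; have hu1 := congrFun hu 1
  have hv0 := congrFun hv 0; have hv1 := congrFun hv 1
  simp only [Fin.isValue, cons_val_zero, cons_val_one, cons_val_fin_one, mulVec_fin_two,
    Pi.smul_apply, smul_eq_mul] at hu0 hu1 hv0 hv1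
  simp only [Wron]
  linear_combination v x 1 * hu1 + v x 0 * hu0 - u x 0 * hv0 - u x 1 * hv1
    - z * (u x 0 * v x 1 - u x 1 * v x 0) * h01

theorem wron_eq_wron_left_of_symmetric {a b : ℝ} {z : ℂ} {S : ℝ → Matrix (Fin 2) (Fin 2) ℂ}
    (hS : ∀ x ∈ Set.Icc a b, (S x)ᵀ = S x) {u v u' v' : ℝ → Fin 2 → ℂ}
    (hu : ∀ x ∈ Set.Icc a b, HasDerivAt u (u' x) x) (hv : ∀ x ∈ Set.Icc a b, HasDerivAt v (v' x) x)
    (hue : ∀ x ∈ Set.Icc a b, Jmat *ᵥ u' x = z • S x *ᵥ u x)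
    (hve : ∀ x ∈ Set.Icc a b, Jmat *ᵥ v' x = z • S x *ᵥ v x) :
    ∀ x ∈ Set.Icc a b, Wron u v x = Wron u v a := by
  have hderiv : ∀ x ∈ Set.Icc a b, HasDerivAt (Wron u v) 0 x := fun x hx =>
    wron_deriv_eq_zero (hS x hx) (hue x hx) (hve x hx) ▸ hasDerivAt_wron (hu x hx) (hv x hx)
  exact constant_of_has_deriv_right_zero
    (fun x hx => (hderiv x hx).continuousAt.continuousWithinAt)
    (fun x hx => (hderiv x (Set.Ico_subset_Icc_self hx)).hasDerivWithinAt)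

/-- Plücker relation for the four vectors `u, v, ū, v̄` in `ℂ²`. -/
theorem norm_sq_wron_star (u v : ℝ → Fin 2 → ℂ) (x : ℝ) :
    ((‖Wron u (fun t => star (v t)) x‖)^2 : ℂ)
      = Wron u v x * star (Wron u v x)
        - Wron u (fun t => star (u t)) x * Wron v (fun t => star (v t)) x := by
  rw [← Complex.ofReal_pow, ← Complex.normSq_eq_norm_sq, Complex.normSq_eq_conj_mul_self]
  simp only [Wron, Pi.star_apply, RCLike.star_def, map_sub, map_mul, Complex.conj_conj]
  ring

theorem wronskian_identity_general (N : ℝ) (hN : 0 < N) (z : ℂ)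
    (H : ℝ → Matrix (Fin 2) (Fin 2) ℂ) (hH : ∀ x, (H x).PosSemidef)
    (hHre : ∀ x, ∀ i j, ((H x) i j).im = 0)
    (u v u' v' : ℝ → Fin 2 → ℂ)
    (hu0 : u 0 = ![1, 0]) (hv0 : v 0 = ![0, 1])
    (hu : ∀ x ∈ Set.Icc (0:ℝ) N, HasDerivAt u (u' x) x)
    (hv : ∀ x ∈ Set.Icc (0:ℝ) N, HasDerivAt v (v' x) x)
    (hue : ∀ x ∈ Set.Icc (0:ℝ) N, Jmat *ᵥ u' x = z • ((H x) *ᵥ u x))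
    (hve : ∀ x ∈ Set.Icc (0:ℝ) N, Jmat *ᵥ v' x = z • ((H x) *ᵥ v x)) :
    ((‖Wron u (fun x => star (v x)) N‖)^2 : ℂ)
      = 1 - Wron u (fun x => star (u x)) N * Wron v (fun x => star (v x)) N := by
  have hsymm : ∀ x ∈ Set.Icc (0:ℝ) N, (H x)ᵀ = H x := fun x _ =>
    (hH x).isHermitian.transpose_eq_self_of_im_eq_zero (hHre x)
  have hW : Wron u v N = 1 := by
    rw [wron_eq_wron_left_of_symmetric hsymm hu hv hue hve N ⟨hN.le, le_rfl⟩]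
    simp [Wron, hu0, hv0]
  rw [norm_sq_wron_star, hW, star_one, mul_one]

/-- `|W_N(u, v̄)|² = 1 − W_N(u, ū) W_N(v, v̄)`. -/
theorem wronskian_identity (N : ℝ) (hN : 0 < N) (z : ℂ) (hz : 0 < z.im)
    (H : ℝ → Matrix (Fin 2) (Fin 2) ℂ) (hH : ∀ x, (H x).PosSemidef)
    (hHre : ∀ x, ∀ i j, ((H x) i j).im = 0)
    (u v u' v' : ℝ → Fin 2 → ℂ)
    (hu0 : u 0 = ![1, 0]) (hv0 : v 0 = ![0, 1])
    (hu : ∀ x ∈ Set.Icc (0:ℝ) N, HasDerivAt u (u' x) x)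
    (hv : ∀ x ∈ Set.Icc (0:ℝ) N, HasDerivAt v (v' x) x)
    (hue : ∀ x ∈ Set.Icc (0:ℝ) N, Jmat *ᵥ u' x = z • ((H x) *ᵥ u x))
    (hve : ∀ x ∈ Set.Icc (0:ℝ) N, Jmat *ᵥ v' x = z • ((H x) *ᵥ v x)) :
    ((‖Wron u (fun x => star (v x)) N‖)^2 : ℂ)
      = 1 - Wron u (fun x => star (u x)) N * Wron v (fun x => star (v x)) N :=
  wronskian_identity_general N hN z H hH hHre u v u' v' hu0 hv0 hu hv hue hve
end
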